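/- arXiv:2001.04972 — 2 statements merged into one kernel-verified Lean document; each statement's English description precedes it below -/
import Mathlib

section
/- For x > 0 and 0 < a < 1, one has (x/(x+a))^(1-a) ≤ Γ(x+a)/(x^a · Γ(x)) ≤ 1 (Wendel's inequality for ratios of gamma functions). -/
/-!
Both bounds come from the log-convexity of `Γ` on `(0, ∞)`: interpolating between `Γ x` and
`Γ (x + 1) = x Γ x` gives `Γ (x + a) ≤ x ^ a Γ x`, the upper bound. The same inequality at the
point `x + a` with exponent `1 - a` reads `x Γ x = Γ (x + 1) ≤ (x + a) ^ (1 - a) Γ (x + a)`,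
which rearranges to the lower bound.
-/

open Real

theorem Real.Gamma_add_le_rpow_mul_Gamma {x a : ℝ} (hx : 0 < x) (ha0 : 0 < a) (ha1 : a < 1) :
    Gamma (x + a) ≤ x ^ a * Gamma x := by
  have hΓx : 0 < Gamma x := Gamma_pos_of_pos hx
  calc Gamma (x + a) = Gamma ((1 - a) * x + a * (x + 1)) := by ring_nf
    _ ≤ Gamma x ^ (1 - a) * Gamma (x + 1) ^ a :=
      Gamma_mul_add_mul_le_rpow_Gamma_mul_rpow_Gamma hx (by linarith) (sub_pos.2 ha1) ha0
        (by ring)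
    _ = x ^ a * Gamma x := by
      rw [Gamma_add_one hx.ne', mul_rpow hx.le hΓx.le, mul_left_comm, ← rpow_add hΓx,
        sub_add_cancel, rpow_one]

theorem Real.mul_Gamma_le_rpow_mul_Gamma_add {x a : ℝ} (hx : 0 < x) (ha0 : 0 < a) (ha1 : a < 1) :
    x * Gamma x ≤ (x + a) ^ (1 - a) * Gamma (x + a) := by
  have h := Gamma_add_le_rpow_mul_Gamma (x := x + a) (by linarith) (sub_pos.2 ha1)
    (by linarith : 1 - a < 1)
  rwa [add_add_sub_cancel, Gamma_add_one hx.ne'] at h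

/-- Wendel's inequality for ratios of gamma functions. -/
theorem wendel_inequality (x a : ℝ) (hx : 0 < x) (ha0 : 0 < a) (ha1 : a < 1) :
    (x / (x + a)) ^ (1 - a) ≤ Real.Gamma (x + a) / (x ^ a * Real.Gamma x) ∧
    Real.Gamma (x + a) / (x ^ a * Real.Gamma x) ≤ 1 := by
  have hxa : 0 < x + a := by linarith
  have hden : 0 < x ^ a * Gamma x := mul_pos (rpow_pos_of_pos hx a) (Gamma_pos_of_pos hx)
  refine ⟨?_, (div_le_one hden).2 (Gamma_add_le_rpow_mul_Gamma hx ha0 ha1)⟩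
  rw [div_rpow hx.le hxa.le, div_le_div_iff₀ (rpow_pos_of_pos hxa _) hden]
  calc x ^ (1 - a) * (x ^ a * Gamma x) = x * Gamma x := by
        rw [← mul_assoc, ← rpow_add hx, sub_add_cancel, rpow_one]
    _ ≤ (x + a) ^ (1 - a) * Gamma (x + a) := mul_Gamma_le_rpow_mul_Gamma_add hx ha0 ha1
    _ = Gamma (x + a) * (x + a) ^ (1 - a) := mul_comm _ _
end

section
/- Let 0 < α < 2 and let T_d = Γ(d/2)/(2^α · Γ(1+α/2) · Γ(d/2+α/2)). Then for all positive integers d, 2^(-α/2)/Γ(1+α/2) · d^(-α/2) ≤ T_d ≤ 2^(-α/2)/Γ(1+α/2) · d^(-α/2) + 2^(-α/2)·α^(1-α/2)/Γ(1+α/2) · d^(-1). -/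
/-!
Write `x = d/2`, `s = α/2`. The torsion constant factors as
`2^(-s)/Γ(1+s) · 2^(-s) Γ(x)/Γ(x+s)`, and Wendel's inequality
`x^(-s) ≤ Γ(x)/Γ(x+s) ≤ (x+s)^(1-s)/x` turns the second factor into `d^(-s)` from below and
`(d+α)^(1-s)/d` from above. Subadditivity of `t ↦ t^(1-s)` splits the latter into
`d^(-s) + α^(1-s)/d`.
-/

open Real

namespace Real

/-- Upper half of Wendel's inequality, from the log-convexity of `Γ` between `x` and `x + 1`. -/
theorem Gamma_add_le_rpow_mul_Gamma_s3 {x s : ℝ} (hx : 0 < x) (hs0 : 0 < s) (hs1 : s < 1) :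
    Gamma (x + s) ≤ x ^ s * Gamma x := by
  have hconv := Gamma_mul_add_mul_le_rpow_Gamma_mul_rpow_Gamma (s := x) (t := x + 1)
    hx (by linarith) (a := 1 - s) (b := s) (by linarith) hs0 (by ring)
  have hΓ : 0 < Gamma x := Gamma_pos_of_pos hx
  calc Gamma (x + s) = Gamma ((1 - s) * x + s * (x + 1)) := by ring_nf
    _ ≤ Gamma x ^ (1 - s) * Gamma (x + 1) ^ s := hconv
    _ = x ^ s * Gamma x := by
      rw [Gamma_add_one hx.ne', mul_rpow hx.le hΓ.le, mul_left_comm, ← rpow_add hΓ]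
      norm_num

/-- Lower half of Wendel's inequality: the upper half at `x + s` with exponent `1 - s`. -/
theorem mul_Gamma_le_rpow_mul_Gamma_add_s3 {x s : ℝ} (hx : 0 < x) (hs0 : 0 < s) (hs1 : s < 1) :
    x * Gamma x ≤ (x + s) ^ (1 - s) * Gamma (x + s) := by
  have h := Gamma_add_le_rpow_mul_Gamma_s3 (x := x + s) (s := 1 - s) (by linarith) (by linarith)
    (by linarith)
  rwa [add_add_sub_cancel, Gamma_add_one hx.ne'] at h

end Real

theorem rpow_neg_le_two_rpow_mul_Gamma_half_div {α d : ℝ} (hα0 : 0 < α) (hα2 : α < 2)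
    (hd : 0 < d) :
    d ^ (-α / 2) ≤ 2 ^ (-α / 2) * Gamma (d / 2) / Gamma (d / 2 + α / 2) := by
  have hwendel := Gamma_add_le_rpow_mul_Gamma_s3 (x := d / 2) (s := α / 2) (by positivity)
    (by positivity) (by linarith)
  rw [le_div_iff₀ (Gamma_pos_of_pos (by positivity))]
  calc d ^ (-α / 2) * Gamma (d / 2 + α / 2)
      ≤ d ^ (-α / 2) * ((d / 2) ^ (α / 2) * Gamma (d / 2)) := by gcongr
    _ = 2 ^ (-α / 2) * Gamma (d / 2) := by
      rw [div_rpow hd.le zero_le_two, neg_div, rpow_neg hd.le, rpow_neg zero_le_two]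
      field_simp

theorem two_rpow_mul_Gamma_half_div_le {α d : ℝ} (hα0 : 0 < α) (hα2 : α < 2) (hd : 0 < d) :
    2 ^ (-α / 2) * Gamma (d / 2) / Gamma (d / 2 + α / 2) ≤ (d + α) ^ (1 - α / 2) / d := by
  have hwendel := mul_Gamma_le_rpow_mul_Gamma_add_s3 (x := d / 2) (s := α / 2) (by positivity)
    (by positivity) (by linarith)
  have hsplit : (d / 2 + α / 2) ^ (1 - α / 2) = (d + α) ^ (1 - α / 2) * 2 ^ (α / 2) / 2 := by
    rw [← add_div, div_rpow (by positivity) zero_le_two, rpow_sub two_pos, rpow_one]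
    field_simp
  have hcancel : (2 : ℝ) ^ (-α / 2) * 2 ^ (α / 2) = 1 := by
    rw [neg_div, rpow_neg zero_le_two, inv_mul_cancel₀ (by positivity)]
  rw [div_le_div_iff₀ (Gamma_pos_of_pos (by positivity)) hd]
  calc 2 ^ (-α / 2) * Gamma (d / 2) * d = 2 ^ (-α / 2) * 2 * (d / 2 * Gamma (d / 2)) := by ring
    _ ≤ 2 ^ (-α / 2) * 2 * ((d / 2 + α / 2) ^ (1 - α / 2) * Gamma (d / 2 + α / 2)) := by
      gcongr
    _ = (d + α) ^ (1 - α / 2) * Gamma (d / 2 + α / 2) := by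
      rw [hsplit]
      linear_combination ((d + α) ^ (1 - α / 2) * Gamma (d / 2 + α / 2)) * hcancel

theorem torsion_const_eq_mul (α d : ℝ) :
    Gamma (d / 2) / (2 ^ α * Gamma (1 + α / 2) * Gamma (d / 2 + α / 2)) =
      2 ^ (-α / 2) / Gamma (1 + α / 2) *
        (2 ^ (-α / 2) * Gamma (d / 2) / Gamma (d / 2 + α / 2)) := by
  have h2α : (2 : ℝ) ^ α = 2 ^ (α / 2) * 2 ^ (α / 2) := by
    rw [← rpow_add two_pos, add_halves]
  rw [h2α, neg_div, rpow_neg zero_le_two]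
  ring

/-- Two-sided bound for the sup norm of the torsion function of the symmetric α-stable
process on the d-dimensional unit ball. -/
theorem stable_ball_torsion_two_sided (α : ℝ) (hα0 : 0 < α) (hα2 : α < 2) (d : ℕ) (hd : 1 ≤ d) :
    2 ^ (-α / 2) / Real.Gamma (1 + α / 2) * (d : ℝ) ^ (-α / 2) ≤
      Real.Gamma (d / 2) / (2 ^ α * Real.Gamma (1 + α / 2) * Real.Gamma (d / 2 + α / 2)) ∧
    Real.Gamma (d / 2) / (2 ^ α * Real.Gamma (1 + α / 2) * Real.Gamma (d / 2 + α / 2)) ≤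
      2 ^ (-α / 2) / Real.Gamma (1 + α / 2) * (d : ℝ) ^ (-α / 2) +
      2 ^ (-α / 2) * α ^ (1 - α / 2) / Real.Gamma (1 + α / 2) * (d : ℝ) ^ (-1 : ℝ) := by
  have hd0 : (0 : ℝ) < d := by exact_mod_cast hd
  have hC : 0 ≤ 2 ^ (-α / 2) / Gamma (1 + α / 2) := by
    have := Gamma_pos_of_pos (show 0 < 1 + α / 2 by positivity)
    positivity
  rw [torsion_const_eq_mul]
  constructor
  · gcongr
    exact rpow_neg_le_two_rpow_mul_Gamma_half_div hα0 hα2 hd0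
  · calc _ ≤ 2 ^ (-α / 2) / Gamma (1 + α / 2) * ((d + α) ^ (1 - α / 2) / d) := by
          exact mul_le_mul_of_nonneg_left (two_rpow_mul_Gamma_half_div_le hα0 hα2 hd0) hC
      _ ≤ 2 ^ (-α / 2) / Gamma (1 + α / 2) * ((d ^ (1 - α / 2) + α ^ (1 - α / 2)) / d) := by
          gcongr
          exact rpow_add_le_add_rpow hd0.le hα0.le (by linarith) (by linarith)
      _ = _ := by
          rw [rpow_sub hd0, rpow_one, rpow_neg_one, neg_div, rpow_neg hd0.le]
          field_simp
end
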